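/- arXiv:1402.3851 — 3 statements merged into one kernel-verified Lean document; each statement's English description precedes it below -/
import Mathlib

section
/- Let G be a weighted graph on a finite vertex set V, let u and v be distinct vertices of G, and let p be a path in G from u to v all of whose edges have positive weight. Then for every function x : V → ℝ, (x(u) − x(v))² ≤ (Σ_{e'∈p} 1/w_G(e')) · Q_G(x), where the sum ranges over the edges of p. -/
/-- A weighted graph on a finite vertex set `V`: a symmetric weight function with zero
diagonal and nonnegative weights. -/
def IsWeightedGraph {V : Type*} (w : V → V → ℝ) : Prop :=
  (∀ i j, w i j = w j i) ∧ (∀ i, w i i = 0) ∧ (∀ i j, 0 ≤ w i j)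

/-- The Laplacian quadratic form `Q_G(x) = (1/2)·Σ_{i,j} w(i,j)·(x i − x j)²`. -/
noncomputable def lapQF {V : Type*} [Fintype V] (w : V → V → ℝ) (x : V → ℝ) : ℝ :=
  (1 / 2) * ∑ i, ∑ j, w i j * (x i - x j) ^ 2

/-- `f : Fin (k+1) → V` is a path in the graph with weights `w` from `u` to `v`:
its vertices are distinct and all its edges have positive weight. -/
def IsPathIn {V : Type*} (w : V → V → ℝ) (u v : V) (k : ℕ) (f : Fin (k + 1) → V) : Prop :=
  f 0 = u ∧ f (Fin.last k) = v ∧ Function.Injective f ∧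
    ∀ i : Fin k, 0 < w (f i.castSucc) (f i.succ)

/-- The sum `Σ_{e' ∈ p} 1 / w(e')` over the edges of the path `f`. -/
noncomputable def pathRes {V : Type*} (w : V → V → ℝ) (k : ℕ) (f : Fin (k + 1) → V) : ℝ :=
  ∑ i : Fin k, (w (f i.castSucc) (f i.succ))⁻¹

/-!
Telescope `x u - x v` along the path into the increments `x (f i) - x (f (i+1))`, and apply
Cauchy–Schwarz with weights `w_i⁻¹` and `w_i`: this bounds `(x u - x v)²` by the resistance of
the path times the energy `Σ_i w_i (x (f i) - x (f (i+1)))²` of the path's edges. Since the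
vertices of the path are distinct, its edges and their reversals are distinct ordered pairs, so
by symmetry of `w` this energy is at most half of the full double sum, which is `Q_G(x)`.
-/

open Finset

theorem Fin.sum_univ_castSucc_sub_succ {M : Type*} [AddCommGroup M] :
    ∀ {k : ℕ} (g : Fin (k + 1) → M), ∑ i : Fin k, (g i.castSucc - g i.succ) = g 0 - g (last k)
  | 0, _ => by simp
  | k + 1, g => by
    rw [Fin.sum_univ_castSucc]
    simp only [Fin.succ_castSucc]
    rw [Fin.sum_univ_castSucc_sub_succ fun i => g i.castSucc, Fin.succ_last, Fin.castSucc_zero]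
    abel

theorem Finset.sq_sum_le_sum_inv_mul_sum_mul_sq {ι R : Type*} [Field R] [LinearOrder R]
    [IsStrictOrderedRing R] (s : Finset ι) (d : ι → R) {c : ι → R} (hc : ∀ i ∈ s, 0 < c i) :
    (∑ i ∈ s, d i) ^ 2 ≤ (∑ i ∈ s, (c i)⁻¹) * ∑ i ∈ s, c i * d i ^ 2 :=
  sum_sq_le_sum_mul_sum_of_sq_le_mul s (fun i hi => inv_nonneg.2 (hc i hi).le)
    (fun i hi => mul_nonneg (hc i hi).le (sq_nonneg _))
    (fun i hi => by rw [inv_mul_cancel_left₀ (hc i hi).ne'])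

section Energy

variable {V : Type*} [Fintype V] {w : V → V → ℝ}

theorem sum_le_lapQF_of_swap_notMem (hsym : ∀ i j, w i j = w j i) (hnn : ∀ i j, 0 ≤ w i j)
    (x : V → ℝ) {E : Finset (V × V)} (hE : ∀ e ∈ E, e.swap ∉ E) :
    ∑ e ∈ E, w e.1 e.2 * (x e.1 - x e.2) ^ 2 ≤ lapQF w x := by
  let T : V × V → ℝ := fun e => w e.1 e.2 * (x e.1 - x e.2) ^ 2
  let Eᵣ := E.map (Equiv.prodComm V V).toEmbedding
  have hdisj : Disjoint E Eᵣ := by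
    simp only [Eᵣ, disjoint_left, mem_map_equiv]
    exact hE
  have hsumᵣ : ∑ e ∈ Eᵣ, T e = ∑ e ∈ E, T e := by
    rw [sum_map]
    refine sum_congr rfl fun e _ => ?_
    simp only [T, Equiv.coe_toEmbedding, Equiv.prodComm_apply, Prod.fst_swap, Prod.snd_swap,
      hsym e.2 e.1]
    ring
  have hlapQF : lapQF w x = 1 / 2 * ∑ e, T e := by
    rw [lapQF, ← Fintype.sum_prod_type']
  have hsub : ∑ e ∈ E.disjUnion Eᵣ hdisj, T e ≤ ∑ e, T e :=
    sum_le_univ_sum_of_nonneg fun e => mul_nonneg (hnn e.1 e.2) (sq_nonneg _)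
  rw [sum_disjUnion, hsumᵣ] at hsub
  rw [hlapQF]
  linarith

theorem sum_path_energy_le_lapQF (hsym : ∀ i j, w i j = w j i) (hnn : ∀ i j, 0 ≤ w i j)
    {k : ℕ} {f : Fin (k + 1) → V} (hf : Function.Injective f) (x : V → ℝ) :
    ∑ i : Fin k, w (f i.castSucc) (f i.succ) * (x (f i.castSucc) - x (f i.succ)) ^ 2 ≤
      lapQF w x := by
  let edge : Fin k ↪ V × V :=
    ⟨fun i => (f i.castSucc, f i.succ), fun i j h => Fin.castSucc_injective k (hf congr($h.1))⟩
  have hE : ∀ e ∈ univ.map edge, e.swap ∉ univ.map edge := by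
    simp only [mem_map, mem_univ, true_and, forall_exists_index,
      forall_apply_eq_imp_iff, not_exists]
    intro i j h
    have h₁ : (j : ℕ) = i + 1 := by simpa [Fin.ext_iff] using hf congr($h.1)
    have h₂ : (j : ℕ) + 1 = i := by simpa [Fin.ext_iff] using hf congr($h.2)
    omega
  have h := sum_le_lapQF_of_swap_notMem hsym hnn x hE
  rwa [sum_map] at h

end Energy

theorem path_resistance_bound_general {V : Type*} [Fintype V]
    (w : V → V → ℝ) (hG : IsWeightedGraph w)
    (u v : V) (k : ℕ) (f : Fin (k + 1) → V)
    (hp : IsPathIn w u v k f) (x : V → ℝ) :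
    (x u - x v) ^ 2 ≤ pathRes w k f * lapQF w x := by
  obtain ⟨hsym, -, hnn⟩ := hG
  obtain ⟨hf0, hfl, hinj, hpos⟩ := hp
  calc (x u - x v) ^ 2 = (∑ i : Fin k, (x (f i.castSucc) - x (f i.succ))) ^ 2 := by
        rw [Fin.sum_univ_castSucc_sub_succ fun i => x (f i), hf0, hfl]
    _ ≤ pathRes w k f *
          ∑ i : Fin k, w (f i.castSucc) (f i.succ) * (x (f i.castSucc) - x (f i.succ)) ^ 2 :=
        sq_sum_le_sum_inv_mul_sum_mul_sq _ _ fun i _ => hpos i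
    _ ≤ pathRes w k f * lapQF w x :=
        mul_le_mul_of_nonneg_left (sum_path_energy_le_lapQF hsym hnn hinj x)
          (sum_nonneg fun i _ => inv_nonneg.2 (hpos i).le)

/-- If `p` is a path from `u` to `v` in a weighted graph `G` all of whose edges have
positive weight, then `(x u − x v)² ≤ (Σ_{e'∈p} 1/w(e')) · Q_G(x)` for every `x`. -/
theorem path_resistance_bound {V : Type*} [Fintype V] [DecidableEq V]
    (w : V → V → ℝ) (hG : IsWeightedGraph w) (hn : 2 ≤ Fintype.card V)
    (u v : V) (huv : u ≠ v) (k : ℕ) (f : Fin (k + 1) → V)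
    (hp : IsPathIn w u v k f) (x : V → ℝ) :
    (x u - x v) ^ 2 ≤ pathRes w k f * lapQF w x :=
  path_resistance_bound_general w hG u v k f hp x
end

section
/- Let G be a weighted graph on n ≥ 2 vertices, let α ≥ 1 and t ≥ 1, and let H_1, …, H_t be a t-bundle of α-spanners of G with union H. Then for every edge e = {u,v} of G that is not an edge of H and for every x : V → ℝ, we have w_G(u,v)·(x(u) − x(v))² ≤ (α/t)·Q_G(x). -/
/-- `H` is a subgraph of `G` carrying the same weights on a subset of the edges of `G`:
its weight function is symmetric and at every pair it either agrees with `G` or is `0`. -/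
def IsSubgraph {V : Type*} (wG wH : V → V → ℝ) : Prop :=
  (∀ i j, wH i j = wH j i) ∧ (∀ i j, wH i j = wG i j ∨ wH i j = 0)

/-- `H` is an `α`-spanner of `G`: a subgraph such that every edge `{u,v}` of `G` has
stretch at most `α` over `H`, i.e. `H` contains a `u`–`v` path `p` with
`w_G(u,v) · Σ_{e'∈p} 1/w(e') ≤ α`. -/
def IsSpanner {V : Type*} (α : ℝ) (wG wH : V → V → ℝ) : Prop :=
  IsSubgraph wG wH ∧ ∀ u v : V, 0 < wG u v →
    ∃ (k : ℕ) (f : Fin (k + 1) → V), IsPathIn wH u v k f ∧ wG u v * pathRes wH k f ≤ α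

open scoped Classical in
/-- The graph obtained from `G` by deleting the edges of `H_1, …, H_{i-1}`. -/
noncomputable def deleteBefore {V : Type*} (wG : V → V → ℝ) {t : ℕ}
    (Hs : Fin t → V → V → ℝ) (i : Fin t) : V → V → ℝ :=
  fun a b => if ∃ j, j < i ∧ Hs j a b ≠ 0 then 0 else wG a b

/-- `H_1, …, H_t` is a `t`-bundle of `α`-spanners of `G`: pairwise edge-disjoint
subgraphs of `G` such that each `H_i` is an `α`-spanner of `G` minus the edges of
`H_1, …, H_{i-1}`. -/
def IsBundle {V : Type*} (α : ℝ) (wG : V → V → ℝ) {t : ℕ}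
    (Hs : Fin t → V → V → ℝ) : Prop :=
  (∀ i, IsSubgraph wG (Hs i)) ∧
  (∀ i j, i ≠ j → ∀ a b, Hs i a b = 0 ∨ Hs j a b = 0) ∧
  (∀ i, IsSpanner α (deleteBefore wG Hs i) (Hs i))

/-! Since `{u,v}` lies in no `H_j`, it survives in every graph `G − (H_1 + ⋯ + H_{i-1})`, so each
`H_i` contains a `u`–`v` path of stretch at most `α`. Cauchy–Schwarz along that path gives
`w_G(u,v)·(x u − x v)² ≤ α·Q_{H_i}(x)`. Summing over `i`, and using that the `H_i` are
edge-disjoint subgraphs of `G` so that `Σ_i Q_{H_i} = Q_H ≤ Q_G`, gives the bound. -/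

section Paths

variable {V : Type*}

theorem Fin.sum_castSucc_sub_succ {G : Type*} [AddCommGroup G] {k : ℕ} (g : Fin (k + 1) → G) :
    ∑ i : Fin k, (g i.castSucc - g i.succ) = g 0 - g (Fin.last k) := by
  induction k with
  | zero => simp
  | succ k ih =>
    have h := ih (fun i => g i.castSucc)
    simp only [Fin.castSucc_zero] at h
    rw [Fin.sum_univ_castSucc]
    simp only [Fin.succ_castSucc, h, Fin.succ_last]
    abel

theorem sq_sub_le_pathRes_mul (w : V → V → ℝ) {k : ℕ} (f : Fin (k + 1) → V)
    (hpos : ∀ i : Fin k, 0 < w (f i.castSucc) (f i.succ)) (x : V → ℝ) :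
    (x (f 0) - x (f (Fin.last k))) ^ 2 ≤
      pathRes w k f *
        ∑ i : Fin k, w (f i.castSucc) (f i.succ) * (x (f i.castSucc) - x (f i.succ)) ^ 2 := by
  have htelescope := Fin.sum_castSucc_sub_succ (fun i => x (f i))
  rw [← htelescope]
  refine Finset.sum_sq_le_sum_mul_sum_of_sq_le_mul _
    (fun i _ => (inv_pos.2 (hpos i)).le) (fun i _ => mul_nonneg (hpos i).le (sq_nonneg _))
    (fun i _ => ?_)
  rw [← mul_assoc, inv_mul_cancel₀ (hpos i).ne', one_mul]

def pathDarts {k : ℕ} (f : Fin (k + 1) → V) : Fin k ⊕ Fin k → V × V :=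
  Sum.elim (fun i => (f i.castSucc, f i.succ)) (fun i => (f i.succ, f i.castSucc))

theorem pathDarts_injective {k : ℕ} {f : Fin (k + 1) → V} (hf : Function.Injective f) :
    Function.Injective (pathDarts f) := by
  have hval : ∀ {i j : Fin (k + 1)}, f i = f j → (i : ℕ) = j := fun h => by rw [hf h]
  rintro (i | i) (j | j) h <;>
    simp only [pathDarts, Sum.elim_inl, Sum.elim_inr, Prod.mk.injEq] at h
  · exact congrArg Sum.inl (Fin.ext (by simpa using hval h.1))
  · have := hval h.1; have := hval h.2; simp only [Fin.val_castSucc, Fin.val_succ] at *; omega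
  · have := hval h.1; have := hval h.2; simp only [Fin.val_castSucc, Fin.val_succ] at *; omega
  · exact congrArg Sum.inr (Fin.ext (by simpa using hval h.1))

theorem pathEnergy_le_lapQF [Fintype V] {w : V → V → ℝ} (hsymm : ∀ a b, w a b = w b a)
    (hnonneg : ∀ a b, 0 ≤ w a b) {k : ℕ} {f : Fin (k + 1) → V} (hf : Function.Injective f)
    (x : V → ℝ) :
    ∑ i : Fin k, w (f i.castSucc) (f i.succ) * (x (f i.castSucc) - x (f i.succ)) ^ 2 ≤
      lapQF w x := by
  set g : V × V → ℝ := fun p => w p.1 p.2 * (x p.1 - x p.2) ^ 2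
  have hg : ∀ p, 0 ≤ g p := fun p => mul_nonneg (hnonneg p.1 p.2) (sq_nonneg _)
  have hreverse : ∀ i : Fin k, g (f i.succ, f i.castSucc) = g (f i.castSucc, f i.succ) :=
    fun i => by simp only [g, hsymm (f i.succ)]; ring
  have hdarts : ∑ s, g (pathDarts f s) ≤ ∑ p, g p := by
    simpa only [Finset.sum_map, Function.Embedding.coeFn_mk] using
      Finset.sum_le_univ_sum_of_nonneg hg (s := Finset.univ.map ⟨_, pathDarts_injective hf⟩)
  -- each edge of the path occurs in the double sum of `lapQF` once per orientation
  rw [Fintype.sum_sum_type] at hdarts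
  simp only [pathDarts, Sum.elim_inl, Sum.elim_inr, hreverse] at hdarts
  rw [lapQF, ← Fintype.sum_prod_type']
  linarith

end Paths

section LaplacianForm

variable {V : Type*} [Fintype V]

theorem lapQF_nonneg {w : V → V → ℝ} (hw : ∀ a b, 0 ≤ w a b) (x : V → ℝ) :
    0 ≤ lapQF w x :=
  mul_nonneg one_half_pos.le <|
    Finset.sum_nonneg fun a _ => Finset.sum_nonneg fun b _ => mul_nonneg (hw a b) (sq_nonneg _)

theorem lapQF_mono {w w' : V → V → ℝ} (h : ∀ a b, w a b ≤ w' a b) (x : V → ℝ) :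
    lapQF w x ≤ lapQF w' x :=
  mul_le_mul_of_nonneg_left (Finset.sum_le_sum fun a _ => Finset.sum_le_sum fun b _ =>
    mul_le_mul_of_nonneg_right (h a b) (sq_nonneg _)) one_half_pos.le

theorem lapQF_sum {ι : Type*} (s : Finset ι) (w : ι → V → V → ℝ) (x : V → ℝ) :
    lapQF (∑ i ∈ s, w i) x = ∑ i ∈ s, lapQF (w i) x := by
  simp only [lapQF, Finset.sum_apply, Finset.sum_mul, Finset.mul_sum]
  symm
  rw [Finset.sum_comm]
  exact Finset.sum_congr rfl fun _ _ => Finset.sum_comm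

end LaplacianForm

section Spanners

variable {V : Type*}

theorem IsSubgraph.nonneg {wG wH : V → V → ℝ} (h : IsSubgraph wG wH)
    (hG : ∀ a b, 0 ≤ wG a b) (a b : V) : 0 ≤ wH a b := by
  rcases h.2 a b with h | h <;> rw [h]
  exact hG a b

theorem IsSpanner.mul_sq_sub_le_mul_lapQF [Fintype V] {α : ℝ} {wG wH : V → V → ℝ}
    (h : IsSpanner α wG wH) (hH : ∀ a b, 0 ≤ wH a b) {u v : V} (huv : 0 < wG u v)
    (x : V → ℝ) : wG u v * (x u - x v) ^ 2 ≤ α * lapQF wH x := by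
  obtain ⟨k, f, ⟨rfl, rfl, hinj, hpos⟩, hstretch⟩ := h.2 u v huv
  have hres : 0 ≤ pathRes wH k f := Finset.sum_nonneg fun i _ => (inv_pos.2 (hpos i)).le
  have hpath : (x (f 0) - x (f (Fin.last k))) ^ 2 ≤ pathRes wH k f * lapQF wH x :=
    (sq_sub_le_pathRes_mul wH f hpos x).trans
      (mul_le_mul_of_nonneg_left (pathEnergy_le_lapQF h.1.1 hH hinj x) hres)
  calc wG (f 0) (f (Fin.last k)) * (x (f 0) - x (f (Fin.last k))) ^ 2
      ≤ wG (f 0) (f (Fin.last k)) * (pathRes wH k f * lapQF wH x) :=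
        mul_le_mul_of_nonneg_left hpath huv.le
    _ = wG (f 0) (f (Fin.last k)) * pathRes wH k f * lapQF wH x := by ring
    _ ≤ α * lapQF wH x := mul_le_mul_of_nonneg_right hstretch (lapQF_nonneg hH x)

theorem deleteBefore_apply_of_forall_eq_zero {wG : V → V → ℝ} {t : ℕ}
    {Hs : Fin t → V → V → ℝ} {a b : V} (h : ∀ j, Hs j a b = 0) (i : Fin t) :
    deleteBefore wG Hs i a b = wG a b :=
  if_neg fun ⟨j, _, hj⟩ => hj (h j)

theorem IsBundle.sum_le {α : ℝ} {wG : V → V → ℝ} {t : ℕ} {Hs : Fin t → V → V → ℝ}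
    (h : IsBundle α wG Hs) (hG : ∀ a b, 0 ≤ wG a b) (a b : V) :
    ∑ i, Hs i a b ≤ wG a b := by
  by_cases hzero : ∀ i, Hs i a b = 0
  · simpa only [hzero, Finset.sum_const_zero] using hG a b
  obtain ⟨i, hi⟩ := not_forall.1 hzero
  rw [Finset.sum_eq_single i (fun j _ hji => (h.2.1 j i hji a b).resolve_right hi)
    (fun hi' => absurd (Finset.mem_univ i) hi')]
  exact ((h.1 i).2 a b).resolve_right hi |>.le

end Spanners

theorem bundle_edge_quadform_bound_general {V : Type*} [Fintype V]
    (wG : V → V → ℝ) (hG : IsWeightedGraph wG)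
    (α : ℝ) (hα : 1 ≤ α) {t : ℕ} (ht : 1 ≤ t)
    (Hs : Fin t → V → V → ℝ) (hbundle : IsBundle α wG Hs)
    (u v : V) (he : 0 < wG u v) (hne : ∑ i, Hs i u v = 0) (x : V → ℝ) :
    wG u v * (x u - x v) ^ 2 ≤ (α / t) * lapQF wG x := by
  have hG₀ : ∀ a b, 0 ≤ wG a b := hG.2.2
  have hHs₀ : ∀ i a b, 0 ≤ Hs i a b := fun i => (hbundle.1 i).nonneg hG₀
  have hzero : ∀ i, Hs i u v = 0 := fun i =>
    (Finset.sum_eq_zero_iff_of_nonneg fun j _ => hHs₀ j u v).1 hne i (Finset.mem_univ i)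
  have hedge : ∀ i, wG u v * (x u - x v) ^ 2 ≤ α * lapQF (Hs i) x := fun i => by
    have hkept := deleteBefore_apply_of_forall_eq_zero (wG := wG) hzero i
    rw [← hkept] at he ⊢
    exact (hbundle.2.2 i).mul_sq_sub_le_mul_lapQF (hHs₀ i) he x
  have htotal : t * (wG u v * (x u - x v) ^ 2) ≤ α * lapQF wG x :=
    calc t * (wG u v * (x u - x v) ^ 2) = ∑ _i : Fin t, wG u v * (x u - x v) ^ 2 := by simp
      _ ≤ ∑ i, α * lapQF (Hs i) x := Finset.sum_le_sum fun i _ => hedge i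
      _ = α * lapQF (∑ i, Hs i) x := by rw [lapQF_sum, Finset.mul_sum]
      _ ≤ α * lapQF wG x := mul_le_mul_of_nonneg_left
          (lapQF_mono (fun a b => by simpa only [Finset.sum_apply] using hbundle.sum_le hG₀ a b)
            x)
          (zero_le_one.trans hα)
  rw [div_mul_eq_mul_div, le_div_iff₀ (by exact_mod_cast ht)]
  linarith

/-- If `H_1, …, H_t` is a `t`-bundle of `α`-spanners of `G` with union `H`, then for every
edge `{u,v}` of `G` not in `H` and every `x : V → ℝ`,
`w_G(u,v)·(x u − x v)² ≤ (α/t)·Q_G(x)`. -/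
theorem bundle_edge_quadform_bound {V : Type*} [Fintype V] [DecidableEq V]
    (wG : V → V → ℝ) (hG : IsWeightedGraph wG) (hn : 2 ≤ Fintype.card V)
    (α : ℝ) (hα : 1 ≤ α) {t : ℕ} (ht : 1 ≤ t)
    (Hs : Fin t → V → V → ℝ) (hbundle : IsBundle α wG Hs)
    (u v : V) (he : 0 < wG u v) (hne : ∑ i, Hs i u v = 0) (x : V → ℝ) :
    wG u v * (x u - x v) ^ 2 ≤ (α / t) * lapQF wG x :=
  bundle_edge_quadform_bound_general wG hG α hα ht Hs hbundle u v he hne x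
end

section
/- (Existence of spanners) Let G be a weighted graph on n ≥ 2 vertices and let k ≥ 1 be an integer. Then there exists a subgraph H of G (carrying the same weights on a subset of the edges of G) with at most n + n^{1+1/k} edges such that st_H(e) ≤ 2k − 1 for every edge e of G; in particular H is a (2k−1)-spanner of G. -/
open scoped Classical in
/-- The number of edges of a weighted graph: the number of unordered pairs with positive
weight, counted as half the number of ordered pairs with positive weight. -/
noncomputable def edgeCount {V : Type*} [Fintype V] (w : V → V → ℝ) : ℝ :=
  ((Finset.univ.filter fun p : V × V => 0 < w p.1 p.2).card : ℝ) / 2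

/-!
The greedy spanner. Scan the edges of `G` by nonincreasing weight, i.e. nondecreasing length
`1 / w`, and keep an edge `{x, y}` only if the edges kept so far contain no `x`–`y` path of
stretch at most `2k - 1`; then every edge of `G` has stretch at most `2k - 1`. A kept edge is
no heavier than the edges kept before it, so at that moment every `x`–`y` walk among them has
at least `2k` edges (a shorter one would have stretch at most `2k - 1`). Hence the kept graph
never contains two distinct paths with the same ends and total length at most `2k` (its girth
exceeds `2k`). Such a graph on `n` vertices has at most `n + n^(1 + 1/k)` edges: delete a
vertex of degree `< 1 + n^(1/k)` and induct; if there is none, some vertex starts at least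
`(n^(1/k))^k = n` paths of length `k`, whose endpoints are distinct and differ from it, which
is impossible.
-/
theorem Real.sub_one_rpow_one_add_add_rpow_le {x t : ℝ} (hx : 1 ≤ x) (ht : 0 ≤ t) :
    (x - 1) ^ (1 + t) + x ^ t ≤ x ^ (1 + t) := by
  have hx1 : 0 ≤ x - 1 := by linarith
  rw [Real.rpow_add' hx1 (by positivity), Real.rpow_add' (by linarith) (by positivity),
    Real.rpow_one, Real.rpow_one]
  nlinarith [Real.rpow_le_rpow hx1 (by linarith : x - 1 ≤ x) ht]

namespace SimpleGraph

variable {V : Type*} {g g' : SimpleGraph V} {k : ℕ}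

/-- `g` has girth greater than `2 * k`, phrased without cycles. -/
def UniqueShortPaths (g : SimpleGraph V) (k : ℕ) : Prop :=
  ∀ ⦃u v : V⦄ (p q : g.Walk u v), p.IsPath → q.IsPath → p.length + q.length ≤ 2 * k → p = q

theorem Walk.mapLe_injective (hle : g ≤ g') (u v : V) :
    Function.Injective (Walk.mapLe hle : g.Walk u v → g'.Walk u v) :=
  Walk.map_injective_of_injective (fun _ _ => id) u v

theorem UniqueShortPaths.anti (hle : g ≤ g') (h : g'.UniqueShortPaths k) :
    g.UniqueShortPaths k := fun _ _ p q hp hq hlen =>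
  Walk.mapLe_injective hle _ _ <| h _ _ (hp.mapLe hle) (hq.mapLe hle) (by simpa using hlen)

namespace Walk

theorem exists_eq_append_cons_of_mem_edges {u v : V} (p : g.Walk u v) {e : Sym2 V}
    (he : e ∈ p.edges) :
    ∃ (a b : V) (hab : g.Adj a b) (p₁ : g.Walk u a) (p₂ : g.Walk b v),
      s(a, b) = e ∧ p = p₁.append (cons hab p₂) := by
  induction p with
  | nil => simp at he
  | @cons u w v h p ih =>
    rcases List.mem_cons.mp (edges_cons h p ▸ he) with rfl | he
    · exact ⟨u, w, h, nil, p, rfl, rfl⟩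
    · obtain ⟨a, b, hab, p₁, p₂, rfl, rfl⟩ := ih he
      exact ⟨a, b, hab, cons h p₁, p₂, rfl, rfl⟩

theorem exists_mapLe_eq (hle : g ≤ g') {u v : V} (p : g'.Walk u v)
    (hp : ∀ e ∈ p.edges, e ∈ g.edgeSet) : ∃ p' : g.Walk u v, p'.mapLe hle = p :=
  ⟨p.transfer g hp, by
    rw [mapLe, ← transfer_eq_map_ofLE _
        (fun _ he => edgeSet_mono hle ((p.transfer g hp).edges_subset_edgeSet he)),
      transfer_transfer, transfer_self]⟩

variable {x y u v : V}

theorem exists_mapLe_eq_of_notMem_edges (p : (g ⊔ edge x y).Walk u v)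
    (hp : s(x, y) ∉ p.edges) : ∃ p' : g.Walk u v, p'.mapLe le_sup_left = p := by
  refine exists_mapLe_eq le_sup_left p fun e he => ?_
  have he' := p.edges_subset_edgeSet he
  rw [edgeSet_sup, Set.mem_union] at he'
  refine he'.resolve_right fun hxy => hp ?_
  rwa [← Set.mem_singleton_iff.mp (edgeSet_edge_subset hxy)]

theorem IsPath.exists_eq_append_cons_sup_edge {p : (g ⊔ edge x y).Walk u v} (hp : p.IsPath)
    (he : s(x, y) ∈ p.edges) :
    ∃ (a b : V) (hab : (g ⊔ edge x y).Adj a b) (p₁ : g.Walk u a) (p₂ : g.Walk b v),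
      s(a, b) = s(x, y) ∧ p₁.IsPath ∧ p₂.IsPath ∧
        p = (p₁.mapLe le_sup_left).append (cons hab (p₂.mapLe le_sup_left)) := by
  obtain ⟨a, b, hab, q₁, q₂, habxy, rfl⟩ := p.exists_eq_append_cons_of_mem_edges he
  have hnodup := hp.isTrail.edges_nodup
  rw [edges_append, edges_cons, List.nodup_middle, habxy, List.nodup_cons,
    List.mem_append, not_or] at hnodup
  obtain ⟨q₁', rfl⟩ := q₁.exists_mapLe_eq_of_notMem_edges hnodup.1.1
  obtain ⟨q₂', rfl⟩ := q₂.exists_mapLe_eq_of_notMem_edges hnodup.1.2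
  exact ⟨a, b, hab, q₁', q₂', habxy, hp.of_append_left.of_mapLe,
    hp.of_append_right.of_cons.of_mapLe, rfl⟩

end Walk

theorem UniqueShortPaths.sup_edge {x y : V} (hg : g.UniqueShortPaths k)
    (hxy : ∀ p : g.Walk x y, 2 * k ≤ p.length) : (g ⊔ edge x y).UniqueShortPaths k := by
  have hlong : ∀ a b, s(a, b) = s(x, y) → ∀ p : g.Walk a b, 2 * k ≤ p.length := by
    rintro a b hab p
    rcases Sym2.eq_iff.mp hab with ⟨rfl, rfl⟩ | ⟨rfl, rfl⟩
    · exact hxy p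
    · simpa using hxy p.reverse
  -- splicing `q` into `p` in place of the new edge gives a walk in `g` between its ends
  have one_side : ∀ {u v} (p q : (g ⊔ edge x y).Walk u v), p.IsPath → s(x, y) ∈ p.edges →
      s(x, y) ∉ q.edges → 2 * k < p.length + q.length := by
    intro u v p q hp hpe hqe
    obtain ⟨a, b, -, p₁, p₂, hab, -, -, rfl⟩ := hp.exists_eq_append_cons_sup_edge hpe
    obtain ⟨q', rfl⟩ := q.exists_mapLe_eq_of_notMem_edges hqe
    have := hlong a b hab (p₁.reverse.append (q'.append p₂.reverse))
    simp only [Walk.length_append, Walk.length_reverse, Walk.length_cons,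
      Walk.length_mapLe] at this ⊢
    omega
  intro u v p q hp hq hlen
  by_cases hpe : s(x, y) ∈ p.edges <;> by_cases hqe : s(x, y) ∈ q.edges
  · obtain ⟨a, b, hab, p₁, p₂, habxy, hp₁, hp₂, rfl⟩ := hp.exists_eq_append_cons_sup_edge hpe
    obtain ⟨a', b', hab', q₁, q₂, habxy', hq₁, hq₂, rfl⟩ := hq.exists_eq_append_cons_sup_edge hqe
    simp only [Walk.length_append, Walk.length_cons, Walk.length_mapLe] at hlen
    rcases Sym2.eq_iff.mp (habxy.trans habxy'.symm) with ⟨rfl, rfl⟩ | ⟨rfl, rfl⟩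
    · rw [hg p₁ q₁ hp₁ hq₁ (by omega), hg p₂ q₂ hp₂ hq₂ (by omega)]
    · have := hlong a b habxy (p₁.reverse.append q₁)
      simp only [Walk.length_append, Walk.length_reverse] at this
      omega
  · exact absurd (one_side p q hp hpe hqe) (by omega)
  · exact absurd (one_side q p hq hqe hpe) (by omega)
  · obtain ⟨p', rfl⟩ := p.exists_mapLe_eq_of_notMem_edges hpe
    obtain ⟨q', rfl⟩ := q.exists_mapLe_eq_of_notMem_edges hqe
    rw [hg p' q' hp.of_mapLe hq.of_mapLe (by simpa using hlen)]

theorem UniqueShortPaths.eq_length_of_adj_getVert (hg : g.UniqueShortPaths k) {r v : V}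
    {p : g.Walk r v} (hp : p.IsPath) (hpk : p.length ≤ k) {j : ℕ} (hj : j ≤ p.length)
    (hadj : g.Adj (p.getVert j) v) : j + 1 = p.length := by
  have hjlt : j < p.length := by
    refine lt_of_le_of_ne hj fun hjp => ?_
    rw [hjp, Walk.getVert_length] at hadj
    exact g.irrefl hadj
  have hv : v ∉ (p.take j).support := by
    intro hv
    obtain ⟨m, hm, -⟩ := Walk.mem_support_iff_exists_getVert.mp hv
    rw [Walk.take_getVert] at hm
    have := (hp.getVert_eq_end_iff (by omega : j ⊓ m ≤ p.length)).mp hm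
    omega
  have heq := hg _ p ((hp.take j).concat hv hadj) hp
    (by rw [Walk.length_concat, Walk.take_length]; omega)
  have := congrArg Walk.length heq
  rw [Walk.length_concat, Walk.take_length] at this
  omega

variable [Fintype V]

open scoped Classical in
noncomputable def pathsFrom (g : SimpleGraph V) (r : V) (i : ℕ) : Finset (Fin (i + 1) → V) :=
  Finset.univ.filter fun f => ∃ p : g.Walk r (f (Fin.last i)),
    p.IsPath ∧ p.length = i ∧ ∀ j : Fin (i + 1), p.getVert j = f j

theorem mem_pathsFrom {r : V} {i : ℕ} {f : Fin (i + 1) → V} :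
    f ∈ pathsFrom g r i ↔ ∃ p : g.Walk r (f (Fin.last i)),
      p.IsPath ∧ p.length = i ∧ ∀ j : Fin (i + 1), p.getVert j = f j := by
  simp [pathsFrom]

theorem one_le_card_pathsFrom_zero (r : V) : 1 ≤ (pathsFrom g r 0).card :=
  Finset.one_le_card.mpr ⟨fun _ => r, mem_pathsFrom.mpr ⟨.nil, by simp, rfl, fun _ => rfl⟩⟩

theorem UniqueShortPaths.degree_le_card_sdiff_add_one [DecidableEq V] [DecidableRel g.Adj]
    (hg : g.UniqueShortPaths k) {r : V} {i : ℕ} (hi : i < k) {f : Fin (i + 1) → V}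
    (hf : f ∈ pathsFrom g r i) :
    g.degree (f (Fin.last i)) ≤
      (g.neighborFinset (f (Fin.last i)) \ Finset.univ.image f).card + 1 := by
  obtain ⟨p, hp, hpi, hpf⟩ := mem_pathsFrom.mp hf
  have hsub : g.neighborFinset (f (Fin.last i)) ∩ Finset.univ.image f ⊆ {f ⟨i - 1, by omega⟩} := by
    intro w hw
    obtain ⟨hadj, hw⟩ := Finset.mem_inter.mp hw
    obtain ⟨j, -, rfl⟩ := Finset.mem_image.mp hw
    rw [mem_neighborFinset, ← hpf j] at hadj
    have := hg.eq_length_of_adj_getVert hp (by omega) (by omega) hadj.symm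
    rw [Finset.mem_singleton]
    congr 1
    ext
    simp only
    omega
  rw [← card_neighborFinset_eq_degree,
    ← Finset.card_sdiff_add_card_inter _ (Finset.univ.image f)]
  exact Nat.add_le_add_left ((Finset.card_le_card hsub).trans_eq (Finset.card_singleton _)) _

theorem snoc_mem_pathsFrom [DecidableEq V] {r : V} {i : ℕ} {f : Fin (i + 1) → V}
    (hf : f ∈ pathsFrom g r i) {w : V} (hadj : g.Adj (f (Fin.last i)) w)
    (hw : w ∉ Finset.univ.image f) : (Fin.snoc f w : Fin (i + 2) → V) ∈ pathsFrom g r (i + 1) := by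
  obtain ⟨p, hp, hpi, hpf⟩ := mem_pathsFrom.mp hf
  have hwp : w ∉ p.support := by
    rw [Walk.mem_support_iff_exists_getVert]
    rintro ⟨n, rfl, hn⟩
    exact hw (Finset.mem_image.mpr ⟨⟨n, by omega⟩, Finset.mem_univ _, (hpf ⟨n, by omega⟩).symm⟩)
  refine mem_pathsFrom.mpr ⟨(p.concat hadj).copy rfl (Fin.snoc_last (α := fun _ => V) w f).symm,
    by simpa using hp.concat hwp hadj, by simpa using hpi, fun j => ?_⟩
  rw [Walk.getVert_copy]
  induction j using Fin.lastCases with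
  | last =>
    rw [Fin.snoc_last, Fin.val_last]
    simpa [hpi] using (p.concat hadj).getVert_length
  | cast j =>
    rw [Fin.snoc_castSucc, ← hpf j, Fin.val_castSucc, Walk.concat_eq_append,
      Walk.getVert_append', if_pos (by omega)]

theorem UniqueShortPaths.mul_card_pathsFrom_le [DecidableEq V] [DecidableRel g.Adj]
    (hg : g.UniqueShortPaths k) {r : V} {i : ℕ} (hi : i < k) {δ : ℝ}
    (hδ : ∀ f ∈ pathsFrom g r i, δ + 1 ≤ g.degree (f (Fin.last i))) :
    δ * (pathsFrom g r i).card ≤ (pathsFrom g r (i + 1)).card := by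
  set ext := fun f : Fin (i + 1) → V => g.neighborFinset (f (Fin.last i)) \ Finset.univ.image f
  have hmaps : ∀ z ∈ (pathsFrom g r i).sigma ext,
      (Fin.snoc z.1 z.2 : Fin (i + 2) → V) ∈ pathsFrom g r (i + 1) := by
    rintro ⟨f, w⟩ hz
    obtain ⟨hf, hw⟩ := Finset.mem_sigma.mp hz
    obtain ⟨hadj, hw⟩ := Finset.mem_sdiff.mp hw
    exact snoc_mem_pathsFrom hf ((mem_neighborFinset _ _ _).mp hadj) hw
  have hinj : Set.InjOn (fun z : (_ : Fin (i + 1) → V) × V => (Fin.snoc z.1 z.2 : Fin (i + 2) → V))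
      ((pathsFrom g r i).sigma ext) := by
    rintro ⟨f, w⟩ - ⟨f', w'⟩ - h
    obtain ⟨rfl, rfl⟩ := Fin.snoc_injective2 h
    rfl
  calc δ * (pathsFrom g r i).card = ∑ _f ∈ pathsFrom g r i, δ := by simp [mul_comm]
    _ ≤ ∑ f ∈ pathsFrom g r i, ((ext f).card : ℝ) := Finset.sum_le_sum fun f hf => by
        have hdeg : (g.degree (f (Fin.last i)) : ℝ) ≤ (ext f).card + 1 := by
          exact_mod_cast hg.degree_le_card_sdiff_add_one hi hf
        linarith [hδ f hf]
    _ = ((pathsFrom g r i).sigma ext).card := by rw [Finset.card_sigma]; push_cast; rfl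
    _ ≤ (pathsFrom g r (i + 1)).card := by
        exact_mod_cast Finset.card_le_card_of_injOn _ hmaps hinj

theorem last_mem_of_mem_pathsFrom {A : Finset V} (hA : g.support ⊆ A) {r : V} (hr : r ∈ A)
    {i : ℕ} {f : Fin (i + 1) → V} (hf : f ∈ pathsFrom g r i) : f (Fin.last i) ∈ A := by
  obtain ⟨p, -, -, -⟩ := mem_pathsFrom.mp hf
  cases hrev : p.reverse with
  | nil => exact hr
  | cons h _ => exact hA ⟨_, h⟩

theorem UniqueShortPaths.card_pathsFrom_le [DecidableEq V] (hg : g.UniqueShortPaths k)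
    (hk : 1 ≤ k) {A : Finset V} (hA : g.support ⊆ A) {r : V} (hr : r ∈ A) :
    (pathsFrom g r k).card ≤ (A.erase r).card := by
  refine Finset.card_le_card_of_injOn (fun f => f (Fin.last k)) (fun f hf => ?_) ?_
  · refine Finset.mem_erase.mpr ⟨fun hfr => ?_, last_mem_of_mem_pathsFrom hA hr hf⟩
    obtain ⟨p, hp, hpk, -⟩ := mem_pathsFrom.mp hf
    have hnil := Walk.isPath_iff_nil.mp ((Walk.isPath_copy _ rfl hfr).mpr hp)
    rw [← Walk.length_eq_zero_iff, Walk.length_copy] at hnil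
    omega
  · intro f hf f' hf' hff'
    obtain ⟨p, hp, hpk, hpf⟩ := mem_pathsFrom.mp hf
    obtain ⟨p', hp', hpk', hpf'⟩ := mem_pathsFrom.mp hf'
    simp only at hff'
    obtain rfl := hg p (p'.copy rfl hff'.symm) hp (by simpa using hp') (by simp; omega)
    funext j
    simp only [Walk.getVert_copy] at hpf
    rw [← hpf j, ← hpf' j]

theorem UniqueShortPaths.pow_le_card_sub_one [DecidableEq V] [DecidableRel g.Adj]
    (hg : g.UniqueShortPaths k) (hk : 1 ≤ k) {A : Finset V} (hA : g.support ⊆ A) {r : V}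
    (hr : r ∈ A) {δ : ℝ} (hδ0 : 0 ≤ δ) (hδ : ∀ v ∈ A, δ + 1 ≤ g.degree v) :
    δ ^ k ≤ A.card - 1 := by
  have hpow : ∀ i ≤ k, δ ^ i ≤ (pathsFrom g r i).card := by
    intro i hi
    induction i with
    | zero => simpa using one_le_card_pathsFrom_zero r
    | succ i ih =>
      calc δ ^ (i + 1) = δ * δ ^ i := pow_succ' δ i
        _ ≤ δ * (pathsFrom g r i).card := mul_le_mul_of_nonneg_left (ih (by omega)) hδ0
        _ ≤ (pathsFrom g r (i + 1)).card := hg.mul_card_pathsFrom_le (by omega)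
            fun f hf => hδ _ (last_mem_of_mem_pathsFrom hA hr hf)
  calc δ ^ k ≤ (pathsFrom g r k).card := hpow k le_rfl
    _ ≤ (A.erase r).card := by exact_mod_cast hg.card_pathsFrom_le hk hA hr
    _ = A.card - 1 := by
        rw [Finset.card_erase_of_mem hr, Nat.cast_sub (Finset.one_le_card.mpr ⟨r, hr⟩),
          Nat.cast_one]

theorem UniqueShortPaths.card_edgeFinset_le [DecidableEq V] [DecidableRel g.Adj]
    (hg : g.UniqueShortPaths k) (hk : 1 ≤ k) (A : Finset V) (hA : g.support ⊆ A) :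
    (g.edgeFinset.card : ℝ) ≤ A.card + (A.card : ℝ) ^ (1 + 1 / (k : ℝ)) := by
  induction A using Finset.strongInduction generalizing g with
  | H A ih =>
  by_cases hlow : ∃ v ∈ A, (g.degree v : ℝ) < 1 + (A.card : ℝ) ^ (1 / (k : ℝ))
  · obtain ⟨v, hv, hdeg⟩ := hlow
    have hsupp : (g.deleteIncidenceSet v).support ⊆ A.erase v := by
      rw [Finset.coe_erase]
      exact (support_deleteIncidenceSet_subset g v).trans (Set.sdiff_subset_sdiff_left hA)
    have ih' := ih (A.erase v) (Finset.erase_ssubset hv) (hg.anti (deleteIncidenceSet_le g v))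
      hsupp
    have hcard : (g.edgeFinset.card : ℝ) =
        (g.deleteIncidenceSet v).edgeFinset.card + g.degree v := by
      rw [card_edgeFinset_deleteIncidenceSet, Nat.cast_sub (g.degree_le_card_edgeFinset v)]
      ring
    have hn : 1 ≤ A.card := Finset.one_le_card.mpr ⟨v, hv⟩
    have herase : ((A.erase v).card : ℝ) = A.card - 1 := by
      rw [Finset.card_erase_of_mem hv, Nat.cast_sub hn, Nat.cast_one]
    have hstep := Real.sub_one_rpow_one_add_add_rpow_le (x := A.card)
      (t := 1 / (k : ℝ)) (by exact_mod_cast hn) (by positivity)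
    rw [herase] at ih'
    linarith
  · push Not at hlow
    rcases A.eq_empty_or_nonempty with rfl | ⟨r, hr⟩
    · have hbot : g = ⊥ := by
        ext a b
        exact iff_of_false (fun h => by simpa using hA ⟨b, h⟩) id
      rw [edgeFinset_eq_empty.mpr hbot]
      simp only [Finset.card_empty, Nat.cast_zero, zero_add]
      positivity
    · have hδ : ∀ v ∈ A, (A.card : ℝ) ^ (1 / (k : ℝ)) + 1 ≤ g.degree v := fun v hv => by
        linarith [hlow v hv]
      have := hg.pow_le_card_sub_one hk hA hr (by positivity) hδ
      rw [← Real.rpow_natCast, ← Real.rpow_mul (by positivity),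
        one_div_mul_cancel (by positivity), Real.rpow_one] at this
      linarith

end SimpleGraph

section Greedy

variable {V : Type*}

def underlyingGraph (w : V → V → ℝ) : SimpleGraph V :=
  SimpleGraph.fromRel fun a b => 0 < w a b

theorem underlyingGraph_adj {w : V → V → ℝ} (hs : ∀ a b, w a b = w b a) {a b : V} :
    (underlyingGraph w).Adj a b ↔ a ≠ b ∧ 0 < w a b := by
  rw [underlyingGraph, SimpleGraph.fromRel_adj, hs b a, or_self]

open scoped Classical in
noncomputable def restrictWeight (h : SimpleGraph V) (w : V → V → ℝ) : V → V → ℝ :=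
  fun a b => if h.Adj a b then w a b else 0

def StretchLE (α : ℝ) (wG wH : V → V → ℝ) (u v : V) : Prop :=
  ∃ (m : ℕ) (f : Fin (m + 1) → V), IsPathIn wH u v m f ∧ wG u v * pathRes wH m f ≤ α

variable {h h' : SimpleGraph V} {w wG : V → V → ℝ}

theorem restrictWeight_of_adj {a b : V} (hab : h.Adj a b) : restrictWeight h w a b = w a b :=
  if_pos hab

theorem adj_of_restrictWeight_pos {a b : V} (hab : 0 < restrictWeight h w a b) : h.Adj a b := by
  by_contra hn
  simp [restrictWeight, hn] at hab

theorem restrictWeight_pos_iff (hpos : ∀ a b, h.Adj a b → 0 < w a b) {a b : V} :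
    0 < restrictWeight h w a b ↔ h.Adj a b :=
  ⟨adj_of_restrictWeight_pos, fun hab => (restrictWeight_of_adj hab).symm ▸ hpos a b hab⟩

theorem isSubgraph_restrictWeight (hs : ∀ a b, w a b = w b a) :
    IsSubgraph w (restrictWeight h w) := by
  refine ⟨fun a b => ?_, fun a b => ?_⟩
  · simp only [restrictWeight]
    rw [h.adj_comm, hs]
  · by_cases hab : h.Adj a b
    · exact .inl (restrictWeight_of_adj hab)
    · exact .inr (if_neg hab)

theorem StretchLE.mono (hle : h ≤ h') {α : ℝ} {u v : V}
    (hst : StretchLE α wG (restrictWeight h wG) u v) :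
    StretchLE α wG (restrictWeight h' wG) u v := by
  obtain ⟨m, f, ⟨hf0, hfm, hfi, hpos⟩, hα⟩ := hst
  have heq : ∀ j : Fin m, restrictWeight h' wG (f j.castSucc) (f j.succ) =
      restrictWeight h wG (f j.castSucc) (f j.succ) := fun j => by
    have hadj := adj_of_restrictWeight_pos (hpos j)
    rw [restrictWeight_of_adj hadj, restrictWeight_of_adj (hle hadj)]
  refine ⟨m, f, ⟨hf0, hfm, hfi, fun j => (heq j).symm ▸ hpos j⟩, ?_⟩
  simpa only [pathRes, heq] using hα

theorem stretchLE_of_adj {α : ℝ} (hα : 1 ≤ α) {u v : V} (huv : h.Adj u v) (hw : 0 < wG u v) :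
    StretchLE α wG (restrictWeight h wG) u v := by
  refine ⟨1, ![u, v], ⟨rfl, rfl, ?_, fun j => ?_⟩, ?_⟩
  · intro a b hab
    fin_cases a <;> fin_cases b <;> simp_all [huv.ne, huv.ne.symm]
  · fin_cases j
    simpa [restrictWeight_of_adj huv] using hw
  · simp [pathRes, restrictWeight_of_adj huv, hw.ne', hα]

theorem pathRes_le_of_le {m : ℕ} {f : Fin (m + 1) → V} {c : ℝ} (hc : 0 < c)
    (hle : ∀ j : Fin m, c ≤ w (f j.castSucc) (f j.succ)) : pathRes w m f ≤ m * c⁻¹ := by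
  calc pathRes w m f ≤ ∑ _j : Fin m, c⁻¹ :=
        Finset.sum_le_sum fun j _ => inv_anti₀ hc (hle j)
    _ = m * c⁻¹ := by simp

theorem stretchLE_of_walk (hpos : ∀ a b, h.Adj a b → 0 < wG a b) {u v : V}
    (hmin : ∀ a b, h.Adj a b → wG u v ≤ wG a b) (huv : 0 < wG u v) (p : h.Walk u v) {α : ℝ}
    (hα : p.length ≤ α) : StretchLE α wG (restrictWeight h wG) u v := by
  classical
  have hb := p.bypass_isPath
  have hadj : ∀ j : Fin p.bypass.length, h.Adj (p.bypass.getVert j) (p.bypass.getVert (j + 1)) :=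
    fun j => p.bypass.adj_getVert_succ j.isLt
  refine ⟨p.bypass.length, fun j => p.bypass.getVert j,
    ⟨p.bypass.getVert_zero, p.bypass.getVert_length, fun i j hij => ?_, fun j => ?_⟩, ?_⟩
  · exact Fin.ext (hb.getVert_injOn (Nat.lt_succ_iff.mp i.isLt) (Nat.lt_succ_iff.mp j.isLt) hij)
  · exact (restrictWeight_pos_iff hpos).mpr (hadj j)
  · have hres := pathRes_le_of_le (w := restrictWeight h wG)
      (f := fun j : Fin (p.bypass.length + 1) => p.bypass.getVert j) huv fun j => by
        show wG u v ≤ restrictWeight h wG (p.bypass.getVert j) (p.bypass.getVert (j + 1))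
        rw [restrictWeight_of_adj (hadj j)]
        exact hmin _ _ (hadj j)
    have hlen : (p.bypass.length : ℝ) ≤ α :=
      le_trans (by exact_mod_cast p.length_bypass_le_length) hα
    calc wG u v * pathRes (restrictWeight h wG) p.bypass.length _
        ≤ wG u v * (p.bypass.length * (wG u v)⁻¹) := mul_le_mul_of_nonneg_left hres huv.le
      _ = p.bypass.length := by field_simp
      _ ≤ α := hlen

theorem SimpleGraph.UniqueShortPaths.sup_edge_of_not_stretchLE {k : ℕ}
    (hU : h.UniqueShortPaths k) (hpos : ∀ a b, h.Adj a b → 0 < wG a b) {x y : V}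
    (hmin : ∀ a b, h.Adj a b → wG x y ≤ wG a b) (hxy : 0 < wG x y)
    (hst : ¬StretchLE (2 * k - 1) wG (restrictWeight h wG) x y) :
    (h ⊔ SimpleGraph.edge x y).UniqueShortPaths k := by
  refine hU.sup_edge fun p => ?_
  by_contra hp
  refine hst (stretchLE_of_walk hpos hmin hxy p ?_)
  have : (p.length : ℝ) + 1 ≤ 2 * k := by exact_mod_cast (by omega : p.length + 1 ≤ 2 * k)
  linarith

theorem exists_uniqueShortPaths_stretchLE (hs : ∀ a b, wG a b = wG b a) {k : ℕ} (hk : 1 ≤ k)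
    (S : Finset (Sym2 V)) (hS : ∀ e ∈ S, e ∈ (underlyingGraph wG).edgeSet) :
    ∃ h : SimpleGraph V, h.edgeSet ⊆ S ∧ h.UniqueShortPaths k ∧
      ∀ u v, s(u, v) ∈ S → StretchLE (2 * k - 1) wG (restrictWeight h wG) u v := by
  classical
  have hα : (1 : ℝ) ≤ 2 * k - 1 := by
    have : (1 : ℝ) ≤ k := by exact_mod_cast hk
    linarith
  induction S using Finset.induction_on_min_value (Sym2.lift ⟨wG, hs⟩) with
  | empty =>
    refine ⟨⊥, by simp, fun u v p q _ _ _ => ?_, by simp⟩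
    cases p with
    | nil => cases q with
      | nil => rfl
      | cons h _ => exact h.elim
    | cons h _ => exact h.elim
  | insert e S _ hmin ih =>
    obtain ⟨h, hhS, hU, hstretch⟩ := ih fun e' he' => hS e' (Finset.mem_insert_of_mem he')
    by_cases hgood : ∀ u v, s(u, v) = e → StretchLE (2 * k - 1) wG (restrictWeight h wG) u v
    · refine ⟨h, hhS.trans (by simp), hU, fun u v huv => ?_⟩
      rcases Finset.mem_insert.mp huv with huv | huv
      · exact hgood u v huv
      · exact hstretch u v huv
    push Not at hgood
    obtain ⟨x, y, rfl, hxy⟩ := hgood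
    have hhS' : ∀ a b, h.Adj a b → s(a, b) ∈ S := fun a b hab => hhS hab
    have hpos : ∀ a b, h.Adj a b → 0 < wG a b := fun a b hab =>
      ((underlyingGraph_adj hs).mp (hS _ (Finset.mem_insert_of_mem (hhS' a b hab)))).2
    have hxyG := (underlyingGraph_adj hs).mp (hS _ (Finset.mem_insert_self _ _))
    refine ⟨h ⊔ SimpleGraph.edge x y, ?_, hU.sup_edge_of_not_stretchLE hpos
      (fun a b hab => hmin _ (hhS' a b hab)) hxyG.2 hxy, fun u v huv => ?_⟩
    · rw [SimpleGraph.edgeSet_sup, Finset.coe_insert]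
      exact Set.union_subset (hhS.trans (Set.subset_insert _ _))
        (SimpleGraph.edgeSet_edge_subset.trans (by simp))
    · rcases Finset.mem_insert.mp huv with huv | huv
      · have huvG : (underlyingGraph wG).Adj u v := by
          have := hS _ (Finset.mem_insert_self _ _)
          rwa [← huv] at this
        obtain ⟨hne, hw⟩ := (underlyingGraph_adj hs).mp huvG
        exact stretchLE_of_adj hα (Or.inr ((SimpleGraph.adj_edge x y).mpr ⟨huv.symm, hne⟩)) hw
      · exact (hstretch u v huv).mono le_sup_left

theorem edgeCount_restrictWeight [Fintype V] [DecidableEq V] [DecidableRel h.Adj]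
    (hpos : ∀ a b, h.Adj a b → 0 < w a b) :
    edgeCount (restrictWeight h w) = h.edgeFinset.card := by
  rw [edgeCount, div_eq_iff two_ne_zero, mul_comm]
  norm_cast
  rw [SimpleGraph.two_mul_card_edgeFinset]
  congr 1
  ext ⟨a, b⟩
  simp [restrictWeight_pos_iff hpos]

end Greedy

theorem exists_spanner_general {V : Type*} [Fintype V]
    (wG : V → V → ℝ) (hG : IsWeightedGraph wG)
    (k : ℕ) (hk : 1 ≤ k) :
    ∃ wH : V → V → ℝ,
      edgeCount wH ≤ (Fintype.card V : ℝ) +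
        (Fintype.card V : ℝ) ^ ((1 : ℝ) + 1 / (k : ℝ)) ∧
      IsSpanner (2 * (k : ℝ) - 1) wG wH := by
  classical
  obtain ⟨hs, hdiag, -⟩ := hG
  obtain ⟨h, hhG, hU, hstretch⟩ := exists_uniqueShortPaths_stretchLE hs hk
    (underlyingGraph wG).edgeFinset fun e he => SimpleGraph.mem_edgeFinset.mp he
  have hpos : ∀ a b, h.Adj a b → 0 < wG a b := fun a b hab =>
    ((underlyingGraph_adj hs).mp (SimpleGraph.mem_edgeFinset.mp (hhG (h.mem_edgeSet.mpr hab)))).2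
  refine ⟨restrictWeight h wG, ?_, isSubgraph_restrictWeight hs, fun u v huv => hstretch u v ?_⟩
  · rw [edgeCount_restrictWeight hpos]
    simpa using hU.card_edgeFinset_le hk Finset.univ (by simp)
  · have hne : u ≠ v := by
      rintro rfl
      exact (hdiag u ▸ huv).false
    exact SimpleGraph.mem_edgeFinset.mpr ((underlyingGraph_adj hs).mpr ⟨hne, huv⟩)

/-- Existence of spanners: every weighted graph on `n ≥ 2` vertices has, for each integer
`k ≥ 1`, a subgraph with at most `n + n^(1+1/k)` edges that is a `(2k−1)`-spanner. -/
theorem exists_spanner {V : Type*} [Fintype V] [DecidableEq V]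
    (wG : V → V → ℝ) (hG : IsWeightedGraph wG) (hn : 2 ≤ Fintype.card V)
    (k : ℕ) (hk : 1 ≤ k) :
    ∃ wH : V → V → ℝ,
      edgeCount wH ≤ (Fintype.card V : ℝ) +
        (Fintype.card V : ℝ) ^ ((1 : ℝ) + 1 / (k : ℝ)) ∧
      IsSpanner (2 * (k : ℝ) - 1) wG wH :=
  exists_spanner_general wG hG k hk
end
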